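/- arXiv:1710.01074 — 3 statements merged into one kernel-verified Lean document; each statement's English description precedes it below -/
import Mathlib

section
/- Generalized Leibniz identity (Caputo case): for 0 < α < 1 and φ ∈ C^1([0,T]), ∂_t^α (t φ(t)) = t ∂_t^α φ(t) + α I^{1−α} φ(t) + t ω_{1−α}(t) φ(0), where ∂_t^α ψ(t) = ∫_0^t ω_{1−α}(t−s) ψ'(s) ds is the Caputo derivative. -/
/-!
Writing `s φ'(s) = t φ'(s) - (t - s) φ'(s)` splits off `t ∂^α φ`. The remaining kernel
`(t - s) ω_{1-α}(t - s) = (t - s)^{1-α} / Γ(1-α)` vanishes at `s = t`, so integrating it by parts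
against `φ'` gives `-(1 - α) I^{1-α} φ(t)` plus the boundary term `t ω_{1-α}(t) φ(0)`.
-/

noncomputable def w (γ t : ℝ) : ℝ := t ^ (γ - 1) / Real.Gamma γ

open MeasureTheory (volume)
open intervalIntegral

theorem integral_sub_rpow_mul_deriv {φ φ' : ℝ → ℝ} {β t : ℝ}
    (hφ : ∀ s, HasDerivAt φ (φ' s) s) (hφ' : IntervalIntegrable φ' volume 0 t) (hβ : 0 < β) :
    ∫ s in (0:ℝ)..t, (t - s) ^ β * φ' s
      = β * (∫ s in (0:ℝ)..t, (t - s) ^ (β - 1) * φ s) - t ^ β * φ 0 := by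
  have hu : Continuous fun s : ℝ => (t - s) ^ β :=
    (continuous_sub_left t).rpow_const fun _ => Or.inr hβ.le
  have hu_deriv : ∀ s ∈ Set.Ioo (min 0 t) (max 0 t),
      HasDerivAt (fun s => (t - s) ^ β) (-(β * (t - s) ^ (β - 1))) s := by
    rintro s ⟨hs_min, hs_max⟩
    have hts : t - s ≠ 0 := by
      rcases le_total 0 t with h | h
      · exact (sub_pos.2 (max_eq_right h ▸ hs_max)).ne'
      · exact (sub_neg.2 (min_eq_right h ▸ hs_min)).ne
    simpa using ((hasDerivAt_id s).const_sub t).rpow_const (p := β) (Or.inl hts)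
  have hpow : IntervalIntegrable (fun s => (t - s) ^ (β - 1)) volume 0 t := by
    simpa using ((intervalIntegrable_rpow' (a := 0) (b := t) (by linarith)).comp_sub_left t).symm
  rw [integral_mul_deriv_eq_deriv_mul_of_hasDerivAt hu.continuousOn
    (fun s _ => (hφ s).continuousAt.continuousWithinAt) hu_deriv (fun s _ => hφ s)
    (hpow.const_mul β).neg hφ']
  simp only [sub_self, Real.zero_rpow hβ.ne', sub_zero, zero_mul, neg_mul, integral_neg,
    mul_assoc, integral_const_mul]
  ring

theorem self_mul_w {γ : ℝ} (hγ : γ ≠ 0) (x : ℝ) : x * w γ x = x ^ γ / Real.Gamma γ := by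
  rcases eq_or_ne x 0 with rfl | hx
  · simp [Real.zero_rpow hγ]
  · rw [w, Real.rpow_sub_one hx]
    field_simp

theorem intervalIntegrable_w_sub_mul {γ : ℝ} (hγ : 0 < γ) (t : ℝ) {f : ℝ → ℝ}
    (hf : Continuous f) : IntervalIntegrable (fun s => w γ (t - s) * f s) volume 0 t := by
  have hpow : IntervalIntegrable (fun s => (t - s) ^ (γ - 1)) volume 0 t := by
    simpa using ((intervalIntegrable_rpow' (a := 0) (b := t) (by linarith)).comp_sub_left t).symm
  exact (hpow.div_const _).mul_continuousOn hf.continuousOn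

theorem integral_sub_mul_w_mul_deriv {φ φ' : ℝ → ℝ} {γ t : ℝ}
    (hφ : ∀ s, HasDerivAt φ (φ' s) s) (hφ' : IntervalIntegrable φ' volume 0 t) (hγ : 0 < γ) :
    ∫ s in (0:ℝ)..t, (t - s) * w γ (t - s) * φ' s
      = γ * (∫ s in (0:ℝ)..t, w γ (t - s) * φ s) - t * w γ t * φ 0 := by
  simp only [self_mul_w hγ.ne', div_mul_eq_mul_div, integral_div,
    integral_sub_rpow_mul_deriv hφ hφ' hγ]
  simp only [w, div_mul_eq_mul_div, integral_div]
  ring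

theorem Caputo_Leibniz_general (α : ℝ) (h1 : α < 1)
    (φ φ' : ℝ → ℝ) (hderiv : ∀ s, HasDerivAt φ (φ' s) s) (hcont : Continuous φ')
    (t : ℝ) :
    ∫ s in (0:ℝ)..t, w (1 - α) (t - s) * (φ s + s * φ' s)
      = t * (∫ s in (0:ℝ)..t, w (1 - α) (t - s) * φ' s)
        + α * (∫ s in (0:ℝ)..t, w (1 - α) (t - s) * φ s)
        + t * w (1 - α) t * φ 0 := by
  have hγ : 0 < 1 - α := sub_pos.2 h1
  have hφ : Continuous φ := continuous_iff_continuousAt.2 fun s => (hderiv s).continuousAt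
  have hkφ := intervalIntegrable_w_sub_mul hγ t hφ
  have hkφ' := intervalIntegrable_w_sub_mul hγ t hcont
  have hkφ'' := hkφ'.continuousOn_mul (continuous_sub_left t).continuousOn
  have hsplit : ∀ s, w (1 - α) (t - s) * (φ s + s * φ' s)
      = w (1 - α) (t - s) * φ s + t * (w (1 - α) (t - s) * φ' s)
        - (t - s) * (w (1 - α) (t - s) * φ' s) := fun s => by ring
  rw [integral_congr fun s _ => hsplit s, integral_sub (hkφ.add (hkφ'.const_mul t)) hkφ'',
    integral_add hkφ (hkφ'.const_mul t), integral_const_mul]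
  simp only [← mul_assoc, integral_sub_mul_w_mul_deriv hderiv (hcont.intervalIntegrable 0 t) hγ]
  ring

theorem Caputo_Leibniz (T α : ℝ) (hT : 0 < T) (h0 : 0 < α) (h1 : α < 1)
    (φ φ' : ℝ → ℝ) (hderiv : ∀ s, HasDerivAt φ (φ' s) s) (hcont : Continuous φ')
    (t : ℝ) (ht : t ∈ Set.Ioc (0:ℝ) T) :
    ∫ s in (0:ℝ)..t, w (1 - α) (t - s) * (φ s + s * φ' s)
      = t * (∫ s in (0:ℝ)..t, w (1 - α) (t - s) * φ' s)
        + α * (∫ s in (0:ℝ)..t, w (1 - α) (t - s) * φ s)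
        + t * w (1 - α) t * φ 0 :=
  Caputo_Leibniz_general α h1 φ φ' hderiv hcont t
end

section
/- Positivity of the fractional integral: for 0 < α < 1 and any piecewise continuous φ : [0,T] → H, where H is a real Hilbert space, one has ∫_0^T ⟨I^α φ(t), φ(t)⟩ dt ≥ 0, where I^α φ(t) = ∫_0^t ω_α(t−s) φ(s) ds. -/
open scoped RealInnerProductSpace

/-!
For `u > 0`, Euler's integral gives
`w α u = (Γ(α) Γ(1-α))⁻¹ ∫₀^∞ r^(-α) e^(-r u) dr`, so by Fubini the quadratic form of the
kernel `w α` is a positive mixture of the quadratic forms of the exponential kernels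
`e^(-r (t - s))`, `r > 0`. Each of these is nonnegative: `y t = ∫₀^t e^(-r (t - s)) φ s ds` solves
`y' = φ - r y`, `y 0 = 0`, hence `⟪y, φ⟫ = (‖y‖²)' / 2 + r ‖y‖² ≥ (‖y‖²)' / 2`, and integrating
over `[0, T]` gives `∫₀^T ⟪y, φ⟫ ≥ ‖y T‖² / 2 ≥ 0`.
-/

open MeasureTheory Set Real

section ExponentialKernel

variable {H : Type*} [NormedAddCommGroup H] [InnerProductSpace ℝ H]

theorem integral_inner_nonneg_of_hasDerivAt {y φ : ℝ → H} {r T : ℝ} (hr : 0 ≤ r) (hT : 0 ≤ T)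
    (hφ : Continuous φ) (hy0 : y 0 = 0) (hy : ∀ t, HasDerivAt y (φ t - r • y t) t) :
    0 ≤ ∫ t in (0:ℝ)..T, ⟪y t, φ t⟫ := by
  have hyc : Continuous y := continuous_iff_continuousAt.2 fun t => (hy t).continuousAt
  have hsq : ∀ t, HasDerivAt (‖y ·‖ ^ 2) (2 * (⟪y t, φ t⟫ - r * ‖y t‖ ^ 2)) t := fun t => by
    convert (hy t).norm_sq using 1
    rw [inner_sub_right, real_inner_smul_right, real_inner_self_eq_norm_sq]
  have hftc := intervalIntegral.integral_eq_sub_of_hasDerivAt (fun t _ => hsq t)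
    ((by fun_prop : Continuous fun t => 2 * (⟪y t, φ t⟫ - r * ‖y t‖ ^ 2)).intervalIntegrable 0 T)
  rw [intervalIntegral.integral_const_mul, hy0, norm_zero] at hftc
  calc 0 ≤ ‖y T‖ ^ 2 / 2 := by positivity
    _ = ∫ t in (0:ℝ)..T, (⟪y t, φ t⟫ - r * ‖y t‖ ^ 2) := by linarith
    _ ≤ ∫ t in (0:ℝ)..T, ⟪y t, φ t⟫ :=
      intervalIntegral.integral_mono_on hT ((by fun_prop : Continuous fun t =>
        ⟪y t, φ t⟫ - r * ‖y t‖ ^ 2).intervalIntegrable _ _)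
        ((hyc.inner hφ).intervalIntegrable _ _) fun t _ => sub_le_self _ (by positivity)

variable [CompleteSpace H]

theorem hasDerivAt_integral_exp_smul {φ : ℝ → H} (hφ : Continuous φ) (r t : ℝ) :
    HasDerivAt (fun t => ∫ s in (0:ℝ)..t, exp (-(r * (t - s))) • φ s)
      (φ t - r • ∫ s in (0:ℝ)..t, exp (-(r * (t - s))) • φ s) t := by
  have hsplit : ∀ t, ∫ s in (0:ℝ)..t, exp (-(r * (t - s))) • φ s
      = exp (-(r * t)) • ∫ s in (0:ℝ)..t, exp (r * s) • φ s := fun t => by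
    rw [← intervalIntegral.integral_smul]
    congr 1 with s
    rw [smul_smul, ← exp_add]
    ring_nf
  have he : HasDerivAt (fun t => exp (-(r * t))) (-r * exp (-(r * t))) t := by
    simpa [mul_comm] using ((hasDerivAt_id t).const_mul r).neg.exp
  have hz := ((by fun_prop : Continuous fun s => exp (r * s) • φ s).integral_hasStrictDerivAt
    0 t).hasDerivAt
  simp_rw [hsplit]
  refine (he.smul hz).congr_deriv ?_
  rw [smul_smul, ← exp_add, smul_smul, neg_mul, neg_smul, mul_smul, neg_add_cancel, exp_zero,
    one_smul]
  abel

theorem integral_inner_integral_exp_smul_nonneg {φ : ℝ → H} (hφ : Continuous φ) {r T : ℝ}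
    (hr : 0 ≤ r) (hT : 0 ≤ T) :
    0 ≤ ∫ t in (0:ℝ)..T, ⟪∫ s in (0:ℝ)..t, exp (-(r * (t - s))) • φ s, φ t⟫ :=
  integral_inner_nonneg_of_hasDerivAt hr hT hφ intervalIntegral.integral_same
    (hasDerivAt_integral_exp_smul hφ r)

theorem inner_intervalIntegral_smul {κ : ℝ → ℝ} {φ : ℝ → H} {a b : ℝ}
    (hκ : IntervalIntegrable κ volume a b) (hφ : Continuous φ) (v : H) :
    ⟪∫ s in a..b, κ s • φ s, v⟫ = ∫ s in a..b, κ s * ⟪φ s, v⟫ := by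
  rw [real_inner_comm, ← innerSL_apply_apply ℝ,
    ← (innerSL ℝ v).intervalIntegral_comp_comm (hκ.smul_continuousOn hφ.continuousOn)]
  simp [real_inner_comm]

end ExponentialKernel

section Truncation

theorem ite_lt_eq_indicator {E : Type*} [Zero E] (f : ℝ → E) (t : ℝ) :
    (fun s => if s < t then f s else 0) = (Iio t).indicator f := by
  ext s; simp [indicator_apply]

theorem setIntegral_Ioc_ite_lt {E : Type*} [NormedAddCommGroup E] [NormedSpace ℝ E] (f : ℝ → E)
    {t T : ℝ} (ht : 0 ≤ t) (htT : t ≤ T) :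
    ∫ s in Ioc 0 T, (if s < t then f s else 0) = ∫ s in (0:ℝ)..t, f s := by
  have hset : Ioc 0 T ∩ Iio t = Ioo 0 t := Set.ext fun s => by
    simp only [mem_inter_iff, mem_Ioc, mem_Iio, mem_Ioo]
    exact ⟨fun h => ⟨h.1.1, h.2⟩, fun h => ⟨⟨h.1, h.2.le.trans htT⟩, h.2⟩⟩
  rw [ite_lt_eq_indicator, setIntegral_indicator measurableSet_Iio, hset,
    ← integral_Ioc_eq_integral_Ioo, intervalIntegral.integral_of_le ht]

theorem integrable_ite_lt {E : Type*} [NormedAddCommGroup E] {f : ℝ → E} {t T : ℝ}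
    (hf : IntegrableOn f (Ioc 0 t)) :
    Integrable (fun s => if s < t then f s else 0) (volume.restrict (Ioc 0 T)) := by
  rw [ite_lt_eq_indicator, integrable_indicator_iff measurableSet_Iio, IntegrableOn,
    Measure.restrict_restrict measurableSet_Iio]
  exact hf.mono_set fun s hs => ⟨hs.2.1, hs.1.le⟩

end Truncation

section AbelKernel

variable {α : ℝ}

theorem intervalIntegrable_rpow_sub (h0 : 0 < α) (t : ℝ) :
    IntervalIntegrable (fun s => (t - s) ^ (α - 1)) volume 0 t := by
  simpa using ((intervalIntegral.intervalIntegrable_rpow' (a := 0) (b := t)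
    (by linarith : -1 < α - 1)).comp_sub_left t).symm

theorem integral_rpow_sub (h0 : 0 < α) (t : ℝ) :
    ∫ s in (0:ℝ)..t, (t - s) ^ (α - 1) = t ^ α / α := by
  rw [intervalIntegral.integral_comp_sub_left (fun x => x ^ (α - 1)), sub_self, sub_zero,
    integral_rpow (Or.inl (by linarith)), sub_add_cancel, zero_rpow h0.ne', sub_zero]

theorem integrable_ite_lt_rpow_sub (h0 : 0 < α) (T : ℝ) :
    Integrable (fun p : ℝ × ℝ => if p.2 < p.1 then (p.1 - p.2) ^ (α - 1) else 0)
      ((volume.restrict (Ioc 0 T)).prod (volume.restrict (Ioc 0 T))) := by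
  have hmeas : Measurable fun p : ℝ × ℝ => if p.2 < p.1 then (p.1 - p.2) ^ (α - 1) else 0 :=
    Measurable.ite (measurableSet_lt measurable_snd measurable_fst) (by fun_prop) measurable_const
  have hnorm : ∀ t s : ℝ, ‖if s < t then (t - s) ^ (α - 1) else 0‖
      = if s < t then (t - s) ^ (α - 1) else 0 := fun t s => by
    split_ifs with h
    · exact norm_of_nonneg (rpow_nonneg (sub_pos.2 h).le _)
    · exact norm_zero
  refine (integrable_prod_iff hmeas.aestronglyMeasurable).2 ⟨?_, ?_⟩
  · filter_upwards [ae_restrict_mem measurableSet_Ioc] with t ht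
    exact integrable_ite_lt ((intervalIntegrable_iff_integrableOn_Ioc_of_le ht.1.le).1
      (intervalIntegrable_rpow_sub h0 t))
  · refine (((continuous_rpow_const h0.le).div_const α).integrableOn_Ioc (a := 0) (b := T)).congr ?_
    filter_upwards [ae_restrict_mem measurableSet_Ioc] with t ht
    simp only [hnorm]
    rw [setIntegral_Ioc_ite_lt _ ht.1.le ht.2, integral_rpow_sub h0]

end AbelKernel

section Subordination

variable {α : ℝ}

theorem integrableOn_rpow_neg_mul_exp_neg_mul (h1 : α < 1) {u : ℝ} (hu : 0 < u) :
    IntegrableOn (fun r : ℝ => r ^ (-α) * exp (-(r * u))) (Ioi 0) := by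
  simpa [mul_comm] using
    integrableOn_rpow_mul_exp_neg_mul_rpow (p := 1) (s := -α) (b := u) (by linarith) one_pos hu

theorem integral_rpow_neg_mul_exp_neg_mul (h1 : α < 1) {u : ℝ} (hu : 0 < u) :
    ∫ r in Ioi (0:ℝ), r ^ (-α) * exp (-(r * u)) = Gamma (1 - α) * u ^ (α - 1) := by
  have h := integral_rpow_mul_exp_neg_mul_Ioi (a := 1 - α) (by linarith) hu
  rw [sub_sub_cancel_left, one_div, inv_rpow hu.le, ← rpow_neg hu.le, neg_sub, mul_comm] at h
  simpa [mul_comm] using h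

/-- Fubini is applied to this function of `((t, s), r)` on `(0, T]² × (0, ∞)`: the factor
`𝟙_{s < t}` turns the triangle `0 < s < t ≤ T` into a square, i.e. a product measure. -/
noncomputable def laplaceIntegrand (α : ℝ) (ψ : ℝ → ℝ → ℝ) (p : (ℝ × ℝ) × ℝ) : ℝ :=
  p.2 ^ (-α) * if p.1.2 < p.1.1 then exp (-(p.2 * (p.1.1 - p.1.2))) * ψ p.1.1 p.1.2 else 0

theorem measurable_laplaceIntegrand {ψ : ℝ → ℝ → ℝ} (hψ : Measurable (Function.uncurry ψ)) :
    Measurable (laplaceIntegrand α ψ) :=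
  (measurable_snd.pow_const _).mul <| Measurable.ite
    (measurableSet_lt measurable_fst.snd measurable_fst.fst) (by fun_prop) measurable_const

theorem norm_laplaceIntegrand (ψ : ℝ → ℝ → ℝ) (p : ℝ × ℝ) {r : ℝ} (hr : 0 ≤ r) :
    ‖laplaceIntegrand α ψ (p, r)‖ = laplaceIntegrand α (fun t s => |ψ t s|) (p, r) := by
  simp only [laplaceIntegrand, norm_mul, Real.norm_of_nonneg (rpow_nonneg hr (-α))]
  split_ifs
  · rw [norm_mul, Real.norm_of_nonneg (exp_nonneg _), Real.norm_eq_abs]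
  · rw [norm_zero]

theorem integral_laplaceIntegrand (h1 : α < 1) (ψ : ℝ → ℝ → ℝ) (t s : ℝ) :
    ∫ r in Ioi 0, laplaceIntegrand α ψ ((t, s), r)
      = if s < t then Gamma (1 - α) * (t - s) ^ (α - 1) * ψ t s else 0 := by
  simp only [laplaceIntegrand]
  split_ifs with h
  · simp_rw [← mul_assoc]
    rw [integral_mul_const, integral_rpow_neg_mul_exp_neg_mul h1 (sub_pos.2 h)]
  · simp

theorem integrable_laplaceIntegrand (h0 : 0 < α) (h1 : α < 1) {ψ : ℝ → ℝ → ℝ}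
    (hψ : Continuous (Function.uncurry ψ)) (T : ℝ) :
    Integrable (laplaceIntegrand α ψ)
      (((volume.restrict (Ioc 0 T)).prod (volume.restrict (Ioc 0 T))).prod
        (volume.restrict (Ioi 0))) := by
  obtain ⟨B, hB⟩ := (isCompact_Icc.prod isCompact_Icc).exists_bound_of_continuousOn
    (hψ.continuousOn (s := Icc (0:ℝ) T ×ˢ Icc 0 T))
  have hsquare : ∀ᵐ p ∂(volume.restrict (Ioc (0:ℝ) T)).prod (volume.restrict (Ioc 0 T)),
      p ∈ Ioc 0 T ×ˢ Ioc 0 T := by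
    rw [Measure.prod_restrict]
    exact ae_restrict_mem (measurableSet_Ioc.prod measurableSet_Ioc)
  have hmeas := measurable_laplaceIntegrand (α := α) hψ.measurable
  refine (integrable_prod_iff hmeas.aestronglyMeasurable).2 ⟨?_, ?_⟩
  · refine ae_of_all _ fun ⟨t, s⟩ => ?_
    simp only [laplaceIntegrand]
    split_ifs with h
    · simp_rw [← mul_assoc]
      exact (integrableOn_rpow_neg_mul_exp_neg_mul h1 (sub_pos.2 h)).mul_const _
    · simp
  · refine ((integrable_ite_lt_rpow_sub h0 T).const_mul (Gamma (1 - α) * B)).mono'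
      hmeas.norm.stronglyMeasurable.integral_prod_right'.aestronglyMeasurable ?_
    filter_upwards [hsquare] with ⟨t, s⟩ hts
    rw [setIntegral_congr_fun measurableSet_Ioi fun r hr => norm_laplaceIntegrand ψ _ (le_of_lt hr),
      integral_laplaceIntegrand h1]
    have hψB : |ψ t s| ≤ B := hB (t, s) ⟨Ioc_subset_Icc_self hts.1, Ioc_subset_Icc_self hts.2⟩
    have hΓ : 0 < Gamma (1 - α) := Gamma_pos_of_pos (by linarith)
    split_ifs with h
    · have hpow : 0 ≤ (t - s) ^ (α - 1) := rpow_nonneg (sub_pos.2 h).le _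
      rw [norm_of_nonneg (by positivity)]
      nlinarith [mul_le_mul_of_nonneg_left hψB (mul_nonneg hΓ.le hpow)]
    · simp

theorem integral_w_mul_eq_integral_exp_mul (h0 : 0 < α) (h1 : α < 1) {ψ : ℝ → ℝ → ℝ}
    (hψ : Continuous (Function.uncurry ψ)) {T : ℝ} (hT : 0 ≤ T) :
    ∫ t in (0:ℝ)..T, ∫ s in (0:ℝ)..t, w α (t - s) * ψ t s
      = (Gamma α * Gamma (1 - α))⁻¹ * ∫ r in Ioi 0,
          r ^ (-α) * ∫ t in (0:ℝ)..T, ∫ s in (0:ℝ)..t, exp (-(r * (t - s))) * ψ t s := by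
  set μ := volume.restrict (Ioc (0:ℝ) T)
  set ν := volume.restrict (Ioi (0:ℝ))
  set c := (Gamma α * Gamma (1 - α))⁻¹ with hc
  have hF := integrable_laplaceIntegrand h0 h1 hψ T
  have hw : ∀ t s, (if s < t then w α (t - s) * ψ t s else 0)
      = c * ∫ r, laplaceIntegrand α ψ ((t, s), r) ∂ν := fun t s => by
    have hΓ : Gamma α ≠ 0 := (Gamma_pos_of_pos h0).ne'
    have hΓ' : Gamma (1 - α) ≠ 0 := (Gamma_pos_of_pos (by linarith)).ne'
    rw [integral_laplaceIntegrand h1]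
    split_ifs
    · rw [w, hc]; field_simp
    · simp
  calc ∫ t in (0:ℝ)..T, ∫ s in (0:ℝ)..t, w α (t - s) * ψ t s
      = ∫ t, ∫ s, (if s < t then w α (t - s) * ψ t s else 0) ∂μ ∂μ := by
        rw [intervalIntegral.integral_of_le hT]
        exact setIntegral_congr_fun measurableSet_Ioc fun t ht =>
          (setIntegral_Ioc_ite_lt _ ht.1.le ht.2).symm
    _ = c * ∫ p, ∫ r, laplaceIntegrand α ψ (p, r) ∂ν ∂(μ.prod μ) := by
        simp_rw [hw, integral_const_mul]
        rw [integral_prod _ hF.integral_prod_left]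
    _ = c * ∫ r, ∫ p, laplaceIntegrand α ψ (p, r) ∂(μ.prod μ) ∂ν := by
        rw [integral_integral_swap (f := fun p r => laplaceIntegrand α ψ (p, r)) hF]
    _ = c * ∫ r, ∫ t, ∫ s, laplaceIntegrand α ψ ((t, s), r) ∂μ ∂μ ∂ν := by
        congr 1
        exact integral_congr_ae (hF.prod_left_ae.mono fun r hr => integral_prod _ hr)
    _ = c * ∫ r in Ioi 0,
          r ^ (-α) * ∫ t in (0:ℝ)..T, ∫ s in (0:ℝ)..t, exp (-(r * (t - s))) * ψ t s := by
        congr 1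
        refine setIntegral_congr_fun measurableSet_Ioi fun r _ => ?_
        simp only [laplaceIntegrand]
        simp_rw [integral_const_mul]
        rw [intervalIntegral.integral_of_le hT]
        exact congrArg _ (setIntegral_congr_fun measurableSet_Ioc fun t ht =>
          setIntegral_Ioc_ite_lt _ ht.1.le ht.2)

end Subordination

theorem fracInt_positivity {H : Type*} [NormedAddCommGroup H] [InnerProductSpace ℝ H]
    [CompleteSpace H] (T α : ℝ) (hT : 0 < T) (h0 : 0 < α) (h1 : α < 1)
    (φ : ℝ → H) (hφ : Continuous φ) :
    0 ≤ ∫ t in (0:ℝ)..T, ⟪∫ s in (0:ℝ)..t, w α (t - s) • φ s, φ t⟫ := by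
  have hψ : Continuous (Function.uncurry fun t s => ⟪φ s, φ t⟫) :=
    (hφ.comp continuous_snd).inner (hφ.comp continuous_fst)
  have hw : ∀ t, ⟪∫ s in (0:ℝ)..t, w α (t - s) • φ s, φ t⟫
      = ∫ s in (0:ℝ)..t, w α (t - s) * ⟪φ s, φ t⟫ := fun t =>
    inner_intervalIntegral_smul ((intervalIntegrable_rpow_sub h0 t).div_const _) hφ _
  have hexp : ∀ r t, ⟪∫ s in (0:ℝ)..t, exp (-(r * (t - s))) • φ s, φ t⟫
      = ∫ s in (0:ℝ)..t, exp (-(r * (t - s))) * ⟪φ s, φ t⟫ := fun r t =>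
    inner_intervalIntegral_smul
      ((by fun_prop : Continuous fun s => exp (-(r * (t - s)))).intervalIntegrable _ _) hφ _
  have hΓ : 0 < Gamma α * Gamma (1 - α) :=
    mul_pos (Gamma_pos_of_pos h0) (Gamma_pos_of_pos (by linarith))
  simp_rw [hw]
  rw [integral_w_mul_eq_integral_exp_mul h0 h1 hψ hT.le]
  refine mul_nonneg (inv_nonneg.2 hΓ.le) (setIntegral_nonneg measurableSet_Ioi fun r hr =>
    mul_nonneg (rpow_nonneg (le_of_lt hr) _) ?_)
  simp_rw [← hexp]
  exact integral_inner_integral_exp_smul_nonneg hφ (le_of_lt hr) hT.le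
end

section
/- Pointwise bound via fractional energy: if 0 < α < 1 and φ : [0,T] → H is continuously differentiable with φ(0) = 0, then for t ∈ (0,T], ‖φ(t)‖² ≤ (t^α/α²) ∫_0^t ⟨I^{1−α} φ'(s), φ'(s)⟩ ds. -/
/-!
The kernel is a superposition of decaying exponentials:
`x ^ (-α) / Γ(1 - α) = (Γ(α) Γ(1 - α))⁻¹ ∫₀^∞ λ ^ (α - 1) e ^ (-λ x) dλ`.
Hence the fractional energy of `v = φ'` is a `λ ^ (α - 1) dλ`-average of the energies
`∫₀ᵗ ⟪y, v⟫` of the solutions `y = expConv λ v` of `y' = v - λ y`, `y 0 = 0`. For each of them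
`φ t = y t + λ ∫₀ᵗ y` and `2 ∫₀ᵗ ⟪y, v⟫ = ‖y t‖² + 2 λ ∫₀ᵗ ‖y‖²`, so Cauchy–Schwarz gives
`‖φ t‖² ≤ (2 + λ t) ∫₀ᵗ ⟪y, v⟫`. Averaging, with
`∫₀^∞ λ ^ (α - 1) / (2 + λ t) dλ = 2 ^ (α - 1) t ^ (-α) Γ(α) Γ(1 - α)`, yields
`2 ^ (α - 1) t ^ (-α) ‖φ t‖² ≤ ∫₀ᵗ ⟪I^{1-α} φ', φ'⟫`, and `α² ≤ 2 ^ (α - 1)` on `[0, 1]`.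
-/

open scoped RealInnerProductSpace

open MeasureTheory Real Set

theorem integral_rpow_sub_one_mul_exp_neg_mul {a r : ℝ} (ha : 0 < a) (hr : 0 < r) :
    ∫ x in Ioi 0, x ^ (a - 1) * exp (-(r * x)) = r ^ (-a) * Gamma a := by
  rw [integral_rpow_mul_exp_neg_mul_Ioi ha hr, one_div, inv_rpow hr.le, rpow_neg hr.le]

theorem integrableOn_rpow_sub_one_mul_exp_neg_mul {a r : ℝ} (ha : 0 < a) (hr : 0 < r) :
    IntegrableOn (fun x ↦ x ^ (a - 1) * exp (-(r * x))) (Ioi 0) := by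
  simpa [neg_mul] using
    integrableOn_rpow_mul_exp_neg_mul_rpow (p := 1) (by linarith : -1 < a - 1) one_pos hr

theorem w_one_sub_eq_integral {α x : ℝ} (h0 : 0 < α) (hx : 0 < x) :
    w (1 - α) x = (Gamma α * Gamma (1 - α))⁻¹ * ∫ l in Ioi 0, l ^ (α - 1) * exp (-(x * l)) := by
  have := (Gamma_pos_of_pos h0).ne'
  rw [integral_rpow_sub_one_mul_exp_neg_mul h0 hx, w, sub_sub_cancel_left]
  field_simp

section BetaIntegral

variable {α a b l v : ℝ}

theorem rpow_sub_one_mul_exp_neg_add_mul_eq :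
    l ^ (α - 1) * exp (-((a + l * b) * v))
      = exp (-(a * v)) * (l ^ (α - 1) * exp (-((b * v) * l))) := by
  rw [← mul_assoc, mul_comm _ (l ^ _), mul_assoc, ← exp_add]; ring_nf

theorem integral_rpow_sub_one_mul_exp_neg_add_mul_left (hl : 0 ≤ l) (ha : 0 < a) (hb : 0 ≤ b) :
    ∫ v in Ioi 0, l ^ (α - 1) * exp (-((a + l * b) * v)) = l ^ (α - 1) / (a + l * b) := by
  have hc : 0 < a + l * b := by positivity
  simp_rw [← neg_mul]
  rw [integral_const_mul, integral_exp_mul_Ioi (by linarith) 0]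
  field_simp
  simp

theorem integral_rpow_sub_one_mul_exp_neg_add_mul_right (h0 : 0 < α) (hb : 0 < b) (hv : 0 < v) :
    ∫ l in Ioi 0, l ^ (α - 1) * exp (-((a + l * b) * v))
      = Gamma α * b ^ (-α) * (v ^ ((1 - α) - 1) * exp (-(a * v))) := by
  simp_rw [rpow_sub_one_mul_exp_neg_add_mul_eq]
  rw [integral_const_mul, integral_rpow_sub_one_mul_exp_neg_mul h0 (by positivity),
    mul_rpow hb.le hv.le, sub_sub_cancel_left]
  ring

theorem integrable_rpow_sub_one_mul_exp_neg_add_mul (h0 : 0 < α) (h1 : α < 1)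
    (ha : 0 < a) (hb : 0 < b) :
    Integrable (Function.uncurry fun l v : ℝ ↦ l ^ (α - 1) * exp (-((a + l * b) * v)))
      ((volume.restrict (Ioi 0)).prod (volume.restrict (Ioi 0))) := by
  have hmeas : AEStronglyMeasurable
      (Function.uncurry fun l v : ℝ ↦ l ^ (α - 1) * exp (-((a + l * b) * v)))
      ((volume.restrict (Ioi 0)).prod (volume.restrict (Ioi 0))) := by
    unfold Function.uncurry; fun_prop
  rw [integrable_prod_iff' hmeas]
  constructor
  · filter_upwards [self_mem_ae_restrict measurableSet_Ioi] with v (hv : 0 < v)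
    simp_rw [Function.uncurry_apply_pair, rpow_sub_one_mul_exp_neg_add_mul_eq]
    exact (integrableOn_rpow_sub_one_mul_exp_neg_mul h0 (mul_pos hb hv)).const_mul _
  · have hint : IntegrableOn (fun v ↦ Gamma α * b ^ (-α) * (v ^ ((1 - α) - 1) * exp (-(a * v))))
        (Ioi 0) :=
      (integrableOn_rpow_sub_one_mul_exp_neg_mul (by linarith) ha).const_mul _
    refine hint.congr_fun (fun v (hv : 0 < v) ↦ ?_) measurableSet_Ioi
    dsimp only [Function.uncurry_apply_pair]
    rw [← integral_rpow_sub_one_mul_exp_neg_add_mul_right h0 hb hv]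
    refine setIntegral_congr_fun measurableSet_Ioi fun l (hl : 0 < l) ↦ ?_
    exact (norm_of_nonneg (by have := rpow_nonneg hl.le (α - 1); positivity)).symm

theorem integral_rpow_div_add_mul (h0 : 0 < α) (h1 : α < 1) (ha : 0 < a) (hb : 0 < b) :
    ∫ l in Ioi 0, l ^ (α - 1) / (a + l * b)
      = a ^ (α - 1) * b ^ (-α) * (Gamma α * Gamma (1 - α)) := by
  calc ∫ l in Ioi 0, l ^ (α - 1) / (a + l * b)
      = ∫ l in Ioi 0, ∫ v in Ioi 0, l ^ (α - 1) * exp (-((a + l * b) * v)) :=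
        (setIntegral_congr_fun measurableSet_Ioi fun l (hl : 0 < l) ↦
          integral_rpow_sub_one_mul_exp_neg_add_mul_left hl.le ha hb.le).symm
    _ = ∫ v in Ioi 0, ∫ l in Ioi 0, l ^ (α - 1) * exp (-((a + l * b) * v)) :=
        integral_integral_swap (integrable_rpow_sub_one_mul_exp_neg_add_mul h0 h1 ha hb)
    _ = ∫ v in Ioi 0, Gamma α * b ^ (-α) * (v ^ ((1 - α) - 1) * exp (-(a * v))) :=
        setIntegral_congr_fun measurableSet_Ioi fun v (hv : 0 < v) ↦
          integral_rpow_sub_one_mul_exp_neg_add_mul_right h0 hb hv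
    _ = a ^ (α - 1) * b ^ (-α) * (Gamma α * Gamma (1 - α)) := by
      rw [integral_const_mul, integral_rpow_sub_one_mul_exp_neg_mul (by linarith) ha, neg_sub]
      ring

end BetaIntegral

theorem integrableOn_rpow_sub_one_mul_min_one_inv {α : ℝ} (h0 : 0 < α) (h1 : α < 1) :
    IntegrableOn (fun l : ℝ ↦ l ^ (α - 1) * min 1 l⁻¹) (Ioi 0) := by
  have hmeas : AEStronglyMeasurable (fun l : ℝ ↦ l ^ (α - 1) * min 1 l⁻¹)
      (volume.restrict (Ioi 0)) := by fun_prop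
  rw [← Ioc_union_Ioi_eq_Ioi zero_le_one, integrableOn_union]
  constructor
  · have hpow : IntegrableOn (fun l : ℝ ↦ l ^ (α - 1)) (Ioc 0 1) :=
      (intervalIntegrable_iff_integrableOn_Ioc_of_le zero_le_one).mp
        (intervalIntegral.intervalIntegrable_rpow' (by linarith))
    refine hpow.mono' (hmeas.mono_measure (Measure.restrict_mono Ioc_subset_Ioi_self le_rfl)) ?_
    filter_upwards [self_mem_ae_restrict measurableSet_Ioc] with l hl
    have hpow_nonneg := rpow_nonneg hl.1.le (α - 1)
    rw [norm_of_nonneg (mul_nonneg hpow_nonneg (le_min zero_le_one (inv_nonneg.2 hl.1.le)))]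
    exact mul_le_of_le_one_right hpow_nonneg (min_le_left _ _)
  · have hpow : IntegrableOn (fun l : ℝ ↦ l ^ (α - 2)) (Ioi 1) :=
      integrableOn_Ioi_rpow_of_lt (by linarith) one_pos
    refine hpow.mono'
      (hmeas.mono_measure (Measure.restrict_mono (Ioi_subset_Ioi zero_le_one) le_rfl)) ?_
    filter_upwards [self_mem_ae_restrict measurableSet_Ioi] with l (hl : 1 < l)
    have hl0 : 0 < l := one_pos.trans hl
    rw [min_eq_right (inv_le_one_of_one_le₀ hl.le), norm_of_nonneg (by positivity),
      ← rpow_neg_one, ← rpow_add hl0]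
    exact le_of_eq (by ring_nf)

theorem integrableOn_sub_rpow_neg {α s : ℝ} (h1 : α < 1) (hs : 0 ≤ s) :
    IntegrableOn (fun r ↦ (s - r) ^ (-α)) (Ioo 0 s) := by
  have h := (intervalIntegral.intervalIntegrable_rpow' (a := 0) (b := s)
    (by linarith : -1 < -α)).comp_sub_left s
  rw [sub_self, sub_zero] at h
  exact (intervalIntegrable_iff_integrableOn_Ioo_of_le hs).1 h.symm

theorem sq_intervalIntegral_le {f : ℝ → ℝ} (hf : Continuous f) {t : ℝ} (ht : 0 ≤ t) :
    (∫ s in 0..t, f s) ^ 2 ≤ t * ∫ s in 0..t, f s ^ 2 := by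
  have hquad : ∀ x : ℝ, 0 ≤ t * (x * x) + (-2 * ∫ s in 0..t, f s) * x + ∫ s in 0..t, f s ^ 2 := by
    intro x
    have hexp : ∫ s in 0..t, (f s - x) ^ 2
        = t * (x * x) + (-2 * ∫ s in 0..t, f s) * x + ∫ s in 0..t, f s ^ 2 := by
      have hpt : ∀ s, (f s - x) ^ 2 = f s ^ 2 + ((-2 * x) * f s + x * x) := fun s ↦ by ring
      simp_rw [hpt]
      rw [intervalIntegral.integral_add, intervalIntegral.integral_add,
        intervalIntegral.integral_const_mul]
      · simp only [intervalIntegral.integral_const, sub_zero, smul_eq_mul]; ring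
      all_goals exact Continuous.intervalIntegrable (by fun_prop) _ _
    rw [← hexp]
    exact intervalIntegral.integral_nonneg ht fun s _ ↦ sq_nonneg _
  have := discrim_le_zero hquad
  rw [discrim] at this
  linarith

theorem sq_le_two_rpow_sub_one {α : ℝ} (h0 : 0 ≤ α) (h1 : α ≤ 1) : α ^ 2 ≤ 2 ^ (α - 1) := by
  have hexp := add_one_le_exp (log 2 * (α - 1))
  have hlog : log 2 < 1 := by linarith [log_two_lt_d9]
  rw [rpow_def_of_pos two_pos]
  nlinarith

section ExpConv

variable {E : Type*} [NormedAddCommGroup E] [NormedSpace ℝ E] {g : ℝ → E} {l s : ℝ}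

noncomputable def expConv (l : ℝ) (g : ℝ → E) (s : ℝ) : E :=
  ∫ r in 0..s, exp (-(l * (s - r))) • g r

@[simp]
theorem expConv_apply_zero : expConv l g 0 = 0 := by
  simp [expConv]

theorem expConv_eq_exp_smul_integral (l : ℝ) (g : ℝ → E) (s : ℝ) :
    expConv l g s = exp (-(l * s)) • ∫ r in 0..s, exp (l * r) • g r := by
  rw [expConv, ← intervalIntegral.integral_smul]
  congr 1 with r
  rw [smul_smul, ← exp_add]
  ring_nf

theorem continuous_expConv_uncurry (hg : Continuous g) :
    Continuous fun q : ℝ × ℝ ↦ expConv q.1 g q.2 := by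
  have hprim := intervalIntegral.continuous_parametric_primitive_of_continuous (a₀ := 0)
    (μ := volume) (f := fun (q : ℝ × ℝ) r ↦ exp (-(q.1 * (q.2 - r))) • g r) (by
      unfold Function.uncurry; fun_prop)
  exact hprim.comp (continuous_id.prodMk continuous_snd)

theorem hasDerivAt_expConv [CompleteSpace E] (hg : Continuous g) (l s : ℝ) :
    HasDerivAt (expConv l g) (g s - l • expConv l g s) s := by
  have hprim : HasDerivAt (fun u ↦ ∫ r in 0..u, exp (l * r) • g r) (exp (l * s) • g s) s :=
    intervalIntegral.integral_hasDerivAt_right (Continuous.intervalIntegrable (by fun_prop) _ _)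
      (Continuous.stronglyMeasurableAtFilter (by fun_prop) _ _) (by fun_prop)
  have hexp : HasDerivAt (fun u ↦ exp (-(l * u))) (-l * exp (-(l * s))) s := by
    simpa [mul_comm] using ((hasDerivAt_id s).const_mul l).neg.exp
  have hprod : HasDerivAt (fun u ↦ exp (-(l * u)) • ∫ r in 0..u, exp (l * r) • g r)
      (exp (-(l * s)) • exp (l * s) • g s + (-l * exp (-(l * s))) • ∫ r in 0..s, exp (l * r) • g r)
      s := hexp.smul hprim
  rw [funext (expConv_eq_exp_smul_integral l g)]
  convert hprod using 1
  rw [smul_smul, smul_smul, ← exp_add, neg_add_cancel, exp_zero, one_smul, neg_mul, neg_smul,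
    sub_eq_add_neg]

theorem integral_exp_neg_mul_sub (hl : 0 < l) (s : ℝ) :
    ∫ r in 0..s, exp (-(l * (s - r))) = (1 - exp (-(l * s))) / l := by
  have hderiv : ∀ r, HasDerivAt (fun r ↦ exp (-(l * (s - r))) / l) (exp (-(l * (s - r)))) r := by
    intro r
    have hlin : HasDerivAt (fun r ↦ -(l * (s - r))) l r := by
      simpa using (((hasDerivAt_id' r).const_sub s).const_mul l).fun_neg
    exact (hlin.exp.div_const l).congr_deriv (mul_div_cancel_right₀ _ hl.ne')
  rw [intervalIntegral.integral_eq_sub_of_hasDerivAt (fun r _ ↦ hderiv r)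
    (Continuous.intervalIntegrable (by fun_prop) _ _)]
  simp only [sub_self, mul_zero, neg_zero, exp_zero, sub_zero]
  ring

theorem norm_expConv_le {M : ℝ} (hl : 0 < l) (hs : 0 ≤ s) (hg : Continuous g)
    (hM : ∀ r ∈ Icc 0 s, ‖g r‖ ≤ M) : ‖expConv l g s‖ ≤ M * min s l⁻¹ := by
  have hM0 : 0 ≤ M := (norm_nonneg _).trans (hM 0 ⟨le_rfl, hs⟩)
  have hint : ‖expConv l g s‖ ≤ M * ((1 - exp (-(l * s))) / l) := by
    rw [← integral_exp_neg_mul_sub hl, ← intervalIntegral.integral_const_mul]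
    refine (intervalIntegral.norm_integral_le_integral_norm hs).trans
      (intervalIntegral.integral_mono_on hs (Continuous.intervalIntegrable (by fun_prop) _ _)
        (Continuous.intervalIntegrable (by fun_prop) _ _) fun r hr ↦ ?_)
    rw [norm_smul, norm_of_nonneg (exp_pos _).le, mul_comm]
    exact mul_le_mul_of_nonneg_right (hM r hr) (exp_pos _).le
  refine hint.trans (mul_le_mul_of_nonneg_left (le_min ?_ ?_) hM0)
  · rw [div_le_iff₀ hl]
    linarith [add_one_le_exp (-(l * s))]
  · rw [div_le_iff₀ hl, inv_mul_cancel₀ hl.ne']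
    linarith [exp_pos (-(l * s))]

theorem norm_rpow_smul_expConv_le {α t M : ℝ} (hl : 0 < l) (hs : s ∈ Icc 0 t) (hg : Continuous g)
    (hM : ∀ r ∈ Icc 0 t, ‖g r‖ ≤ M) :
    ‖l ^ (α - 1) • expConv l g s‖ ≤ M * max t 1 * (l ^ (α - 1) * min 1 l⁻¹) := by
  have hM0 : 0 ≤ M := (norm_nonneg _).trans (hM s hs)
  have hmin : min s l⁻¹ ≤ max t 1 * min 1 l⁻¹ := by
    rcases le_total l 1 with hl1 | hl1
    · rw [min_eq_left ((one_le_inv₀ hl).2 hl1), mul_one]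
      exact (min_le_left _ _).trans (hs.2.trans (le_max_left _ _))
    · rw [min_eq_right (inv_le_one_of_one_le₀ hl1)]
      exact (min_le_right _ _).trans (le_mul_of_one_le_left (inv_nonneg.2 hl.le) (le_max_right _ _))
  have hconv := norm_expConv_le hl hs.1 hg fun r hr ↦ hM r ⟨hr.1, hr.2.trans hs.2⟩
  rw [norm_smul, norm_of_nonneg (rpow_nonneg hl.le _)]
  calc l ^ (α - 1) * ‖expConv l g s‖ ≤ l ^ (α - 1) * (M * (max t 1 * min 1 l⁻¹)) :=
        mul_le_mul_of_nonneg_left (hconv.trans (mul_le_mul_of_nonneg_left hmin hM0))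
          (rpow_nonneg hl.le _)
    _ = M * max t 1 * (l ^ (α - 1) * min 1 l⁻¹) := by ring

theorem integrableOn_rpow_smul_expConv {α : ℝ} (h0 : 0 < α) (h1 : α < 1) (hs : 0 ≤ s)
    (hg : Continuous g) : IntegrableOn (fun l ↦ l ^ (α - 1) • expConv l g s) (Ioi 0) := by
  obtain ⟨M, hM⟩ := isCompact_Icc.exists_bound_of_continuousOn (hg.continuousOn (s := Icc 0 s))
  refine ((integrableOn_rpow_sub_one_mul_min_one_inv h0 h1).const_mul (M * max s 1)).mono' ?_ ?_
  · exact (by fun_prop : Measurable fun l : ℝ ↦ l ^ (α - 1)).aestronglyMeasurable.smul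
      ((continuous_expConv_uncurry hg).comp
        (continuous_id.prodMk continuous_const)).aestronglyMeasurable
  · filter_upwards [self_mem_ae_restrict measurableSet_Ioi] with l (hl : 0 < l)
    exact norm_rpow_smul_expConv_le hl ⟨hs, le_rfl⟩ hg hM

theorem integral_w_smul_eq_integral_rpow_smul_expConv [CompleteSpace E] {α : ℝ} (h0 : 0 < α)
    (h1 : α < 1) (hs : 0 ≤ s) (hg : Continuous g) :
    ∫ r in 0..s, w (1 - α) (s - r) • g r
      = (Gamma α * Gamma (1 - α))⁻¹ • ∫ l in Ioi 0, l ^ (α - 1) • expConv l g s := by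
  set F : ℝ → ℝ → E := fun r l ↦ (l ^ (α - 1) * exp (-((s - r) * l))) • g r
  obtain ⟨M, hM⟩ := isCompact_Icc.exists_bound_of_continuousOn (hg.continuousOn (s := Icc 0 s))
  have hF : Integrable (Function.uncurry F)
      ((volume.restrict (Ioo 0 s)).prod (volume.restrict (Ioi 0))) := by
    have hmeas : AEStronglyMeasurable (Function.uncurry F)
        ((volume.restrict (Ioo 0 s)).prod (volume.restrict (Ioi 0))) :=
      (by fun_prop : Measurable fun q : ℝ × ℝ ↦ q.2 ^ (α - 1) * exp (-((s - q.1) * q.2))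
        ).aestronglyMeasurable.smul (hg.comp continuous_fst).aestronglyMeasurable
    rw [integrable_prod_iff hmeas]
    constructor
    · filter_upwards [self_mem_ae_restrict measurableSet_Ioo] with r hr
      exact (integrableOn_rpow_sub_one_mul_exp_neg_mul h0 (sub_pos.2 hr.2)).smul_const (g r)
    · refine (((integrableOn_sub_rpow_neg h1 hs).mul_const (Gamma α * M))).mono'
        hmeas.norm.integral_prod_right' ?_
      filter_upwards [self_mem_ae_restrict measurableSet_Ioo] with r hr
      have hsr : 0 < s - r := sub_pos.2 hr.2
      have hnorm : ∀ l ∈ Ioi (0 : ℝ),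
          ‖F r l‖ = (l ^ (α - 1) * exp (-((s - r) * l))) * ‖g r‖ := fun l (hl : 0 < l) ↦ by
        rw [norm_smul, norm_of_nonneg (mul_nonneg (rpow_nonneg hl.le _) (exp_pos _).le)]
      have hΓ := (Gamma_pos_of_pos h0).le
      dsimp only [Function.uncurry_apply_pair]
      rw [setIntegral_congr_fun measurableSet_Ioi hnorm, integral_mul_const,
        integral_rpow_sub_one_mul_exp_neg_mul h0 hsr, norm_mul, norm_mul, norm_norm,
        norm_of_nonneg (rpow_nonneg hsr.le _), norm_of_nonneg hΓ, mul_assoc]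
      exact mul_le_mul_of_nonneg_left (mul_le_mul_of_nonneg_left (hM r (Ioo_subset_Icc_self hr)) hΓ)
        (rpow_nonneg hsr.le _)
  calc ∫ r in 0..s, w (1 - α) (s - r) • g r
      = ∫ r in Ioo 0 s, w (1 - α) (s - r) • g r := by
        rw [intervalIntegral.integral_of_le hs, integral_Ioc_eq_integral_Ioo]
    _ = ∫ r in Ioo 0 s, (Gamma α * Gamma (1 - α))⁻¹ • ∫ l in Ioi 0, F r l :=
        setIntegral_congr_fun measurableSet_Ioo fun r hr ↦ by
          rw [w_one_sub_eq_integral h0 (sub_pos.2 hr.2), integral_smul_const, smul_smul]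
    _ = (Gamma α * Gamma (1 - α))⁻¹ • ∫ l in Ioi 0, ∫ r in Ioo 0 s, F r l := by
        rw [integral_smul, integral_integral_swap hF]
    _ = (Gamma α * Gamma (1 - α))⁻¹ • ∫ l in Ioi 0, l ^ (α - 1) • expConv l g s := by
        congr 1
        refine setIntegral_congr_fun measurableSet_Ioi fun l _ ↦ ?_
        rw [expConv, intervalIntegral.integral_of_le hs, integral_Ioc_eq_integral_Ioo,
          ← integral_smul]
        refine setIntegral_congr_fun measurableSet_Ioo fun r _ ↦ ?_
        simp only [F, mul_smul, mul_comm (s - r) l]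

end ExpConv

section Energy

variable {H : Type*} [NormedAddCommGroup H] [InnerProductSpace ℝ H] {g : ℝ → H} {α t : ℝ}

theorem norm_sq_intervalIntegral_le_mul_integral_inner [CompleteSpace H] {v y : ℝ → H} {l : ℝ}
    (hl : 0 ≤ l) (ht : 0 < t) (hv : Continuous v) (hy : ∀ s, HasDerivAt y (v s - l • y s) s) (hy0 : y 0 = 0) :
    ‖∫ s in 0..t, v s‖ ^ 2 ≤ (2 + l * t) * ∫ s in 0..t, ⟪y s, v s⟫ := by
  have hyc : Continuous y := continuous_iff_continuousAt.2 fun s ↦ (hy s).continuousAt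
  have hrep : ∫ s in 0..t, v s = y t + l • ∫ s in 0..t, y s := by
    have hftc := intervalIntegral.integral_eq_sub_of_hasDerivAt (fun s _ ↦ hy s)
      ((hv.sub (hyc.const_smul l)).intervalIntegrable 0 t)
    rw [intervalIntegral.integral_sub (g := fun s ↦ l • y s) (hv.intervalIntegrable _ _)
      ((hyc.const_smul l).intervalIntegrable _ _), intervalIntegral.integral_smul, hy0,
      sub_zero] at hftc
    exact sub_eq_iff_eq_add.mp hftc
  have henergy : 2 * ∫ s in 0..t, ⟪y s, v s⟫
      = ‖y t‖ ^ 2 + 2 * l * ∫ s in 0..t, ‖y s‖ ^ 2 := by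
    have hftc := intervalIntegral.integral_eq_sub_of_hasDerivAt (fun s _ ↦ (hy s).norm_sq)
      ((by fun_prop : Continuous fun s ↦ 2 * ⟪y s, v s - l • y s⟫).intervalIntegrable 0 t)
    simp only [inner_sub_right, real_inner_smul_right, real_inner_self_eq_norm_sq, mul_sub,
      hy0, norm_zero] at hftc
    rw [intervalIntegral.integral_sub (Continuous.intervalIntegrable (by fun_prop) _ _)
        (Continuous.intervalIntegrable (by fun_prop) _ _),
      intervalIntegral.integral_const_mul, intervalIntegral.integral_const_mul,
      intervalIntegral.integral_const_mul] at hftc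
    linarith
  have hcs : ‖∫ s in 0..t, y s‖ ^ 2 ≤ t * ∫ s in 0..t, ‖y s‖ ^ 2 :=
    (pow_le_pow_left₀ (norm_nonneg _)
      (intervalIntegral.norm_integral_le_integral_norm ht.le) 2).trans
      (sq_intervalIntegral_le hyc.norm ht.le)
  have htri : ‖∫ s in 0..t, v s‖ ≤ ‖y t‖ + l * ‖∫ s in 0..t, y s‖ := by
    rw [hrep, ← norm_smul_of_nonneg hl]
    exact norm_add_le _ _
  set a := ‖y t‖
  set b := ‖∫ s in 0..t, y s‖
  set B := ∫ s in 0..t, ‖y s‖ ^ 2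
  have hA : ∫ s in 0..t, ⟪y s, v s⟫ = (a ^ 2 + 2 * l * B) / 2 := by linarith
  have hkey : (a + l * b) ^ 2 * (2 * t) ≤ (2 + l * t) * ((a ^ 2 + 2 * l * B) / 2) * (2 * t) := by
    nlinarith [mul_nonneg hl (sq_nonneg (t * a - 2 * b)), mul_nonneg hl (sub_nonneg.2 hcs),
      mul_nonneg (mul_nonneg (sq_nonneg l) ht.le) (sub_nonneg.2 hcs)]
  rw [hA]
  exact (pow_le_pow_left₀ (norm_nonneg _) htri 2).trans
    (le_of_mul_le_mul_right hkey (by positivity))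

theorem integrable_rpow_mul_inner_expConv (h0 : 0 < α) (h1 : α < 1) (hg : Continuous g) :
    Integrable (fun q : ℝ × ℝ ↦ q.2 ^ (α - 1) * ⟪expConv q.2 g q.1, g q.1⟫)
      ((volume.restrict (Ioc 0 t)).prod (volume.restrict (Ioi 0))) := by
  obtain ⟨M, hM⟩ := isCompact_Icc.exists_bound_of_continuousOn (hg.continuousOn (s := Icc 0 t))
  have hdom : Integrable (fun q : ℝ × ℝ ↦ M * max t 1 * M * (q.2 ^ (α - 1) * min 1 q.2⁻¹))
      ((volume.restrict (Ioc 0 t)).prod (volume.restrict (Ioi 0))) :=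
    (integrableOn_const (C := M * max t 1 * M) measure_Ioc_lt_top.ne).mul_prod
      (integrableOn_rpow_sub_one_mul_min_one_inv h0 h1)
  refine hdom.mono' ?_ ?_
  · exact ((by fun_prop : Measurable fun q : ℝ × ℝ ↦ q.2 ^ (α - 1)).mul
      (((continuous_expConv_uncurry hg).comp (continuous_snd.prodMk continuous_fst)).inner
        (hg.comp continuous_fst)).measurable).aestronglyMeasurable
  · rw [Measure.prod_restrict]
    filter_upwards [self_mem_ae_restrict (measurableSet_Ioc.prod measurableSet_Ioi)]
      with ⟨s, l⟩ ⟨hs, hl⟩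
    have hconv := norm_rpow_smul_expConv_le (α := α) hl (Ioc_subset_Icc_self hs) hg hM
    rw [← real_inner_smul_left, norm_eq_abs]
    calc |⟪l ^ (α - 1) • expConv l g s, g s⟫|
        ≤ ‖l ^ (α - 1) • expConv l g s‖ * ‖g s‖ := abs_real_inner_le_norm _ _
      _ ≤ M * max t 1 * (l ^ (α - 1) * min 1 l⁻¹) * M :=
        mul_le_mul hconv (hM s (Ioc_subset_Icc_self hs)) (norm_nonneg _)
          ((norm_nonneg _).trans hconv)
      _ = M * max t 1 * M * (l ^ (α - 1) * min 1 l⁻¹) := by ring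

theorem integral_inner_w_smul_eq [CompleteSpace H] (h0 : 0 < α) (h1 : α < 1) (ht : 0 ≤ t)
    (hg : Continuous g) :
    ∫ s in 0..t, ⟪∫ r in 0..s, w (1 - α) (s - r) • g r, g s⟫
      = (Gamma α * Gamma (1 - α))⁻¹ *
          ∫ l in Ioi 0, l ^ (α - 1) * ∫ s in 0..t, ⟪expConv l g s, g s⟫ := by
  calc ∫ s in 0..t, ⟪∫ r in 0..s, w (1 - α) (s - r) • g r, g s⟫
      = ∫ s in Ioc 0 t, (Gamma α * Gamma (1 - α))⁻¹ *
          ∫ l in Ioi 0, l ^ (α - 1) * ⟪expConv l g s, g s⟫ := by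
        rw [intervalIntegral.integral_of_le ht]
        refine setIntegral_congr_fun measurableSet_Ioc fun s hs ↦ ?_
        rw [integral_w_smul_eq_integral_rpow_smul_expConv h0 h1 hs.1.le hg, real_inner_smul_left,
          real_inner_comm, ← integral_inner (integrableOn_rpow_smul_expConv h0 h1 hs.1.le hg)]
        simp only [real_inner_smul_right, real_inner_comm (g s)]
    _ = (Gamma α * Gamma (1 - α))⁻¹ *
          ∫ l in Ioi 0, ∫ s in Ioc 0 t, l ^ (α - 1) * ⟪expConv l g s, g s⟫ := by
        rw [integral_const_mul, integral_integral_swap (integrable_rpow_mul_inner_expConv h0 h1 hg)]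
    _ = (Gamma α * Gamma (1 - α))⁻¹ *
          ∫ l in Ioi 0, l ^ (α - 1) * ∫ s in 0..t, ⟪expConv l g s, g s⟫ := by
        simp only [integral_const_mul, intervalIntegral.integral_of_le ht]

theorem two_rpow_mul_rpow_mul_norm_sq_le [CompleteSpace H] (h0 : 0 < α) (h1 : α < 1) (ht : 0 < t)
    (hg : Continuous g) :
    2 ^ (α - 1) * t ^ (-α) * ‖∫ s in 0..t, g s‖ ^ 2
      ≤ ∫ s in 0..t, ⟪∫ r in 0..s, w (1 - α) (s - r) • g r, g s⟫ := by
  have hΓ := Gamma_pos_of_pos h0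
  have hΓ' := Gamma_pos_of_pos (sub_pos.2 h1)
  have hint : IntegrableOn (fun l ↦ l ^ (α - 1) * ∫ s in 0..t, ⟪expConv l g s, g s⟫) (Ioi 0) := by
    refine (integrable_rpow_mul_inner_expConv (t := t) h0 h1 hg).integral_prod_right.congr ?_
    filter_upwards with l
    rw [integral_const_mul, intervalIntegral.integral_of_le ht.le]
  have henergy : ∀ l ∈ Ioi (0 : ℝ), ‖∫ s in 0..t, g s‖ ^ 2 * (l ^ (α - 1) / (2 + l * t))
      ≤ l ^ (α - 1) * ∫ s in 0..t, ⟪expConv l g s, g s⟫ := fun l (hl : 0 < l) ↦ by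
    have := norm_sq_intervalIntegral_le_mul_integral_inner hl.le ht hg (hasDerivAt_expConv hg l)
      expConv_apply_zero
    rw [mul_div_assoc', mul_comm, mul_div_assoc]
    exact mul_le_mul_of_nonneg_left ((div_le_iff₀' (by positivity)).2 this) (rpow_nonneg hl.le _)
  rw [integral_inner_w_smul_eq h0 h1 ht.le hg]
  calc 2 ^ (α - 1) * t ^ (-α) * ‖∫ s in 0..t, g s‖ ^ 2
      = (Gamma α * Gamma (1 - α))⁻¹ *
          ∫ l in Ioi 0, ‖∫ s in 0..t, g s‖ ^ 2 * (l ^ (α - 1) / (2 + l * t)) := by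
        rw [integral_const_mul, integral_rpow_div_add_mul h0 h1 two_pos ht]
        field_simp
    _ ≤ _ := by
        refine mul_le_mul_of_nonneg_left (integral_mono_of_nonneg ?_ hint ?_) (by positivity)
        · filter_upwards [self_mem_ae_restrict measurableSet_Ioi] with l (hl : 0 < l)
          have := rpow_nonneg hl.le (α - 1)
          positivity
        · filter_upwards [self_mem_ae_restrict measurableSet_Ioi] with l hl
          exact henergy l hl

end Energy

theorem pointwise_bound_via_fracEnergy_general {H : Type*} [NormedAddCommGroup H]
    [InnerProductSpace ℝ H] [CompleteSpace H]
    (T α : ℝ) (h0 : 0 < α) (h1 : α < 1)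
    (φ φ' : ℝ → H) (hderiv : ∀ s, HasDerivAt φ (φ' s) s) (hcont : Continuous φ')
    (hφ0 : φ 0 = 0) (t : ℝ) (ht : t ∈ Set.Ioc (0:ℝ) T) :
    ‖φ t‖ ^ 2 ≤ (t ^ α / α ^ 2) *
      ∫ s in (0:ℝ)..t, ⟪∫ r in (0:ℝ)..s, w (1 - α) (s - r) • φ' r, φ' s⟫ := by
  obtain ⟨ht0, -⟩ := ht
  have hφt : φ t = ∫ s in 0..t, φ' s := by
    rw [intervalIntegral.integral_eq_sub_of_hasDerivAt (fun s _ ↦ hderiv s)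
      (hcont.intervalIntegrable _ _), hφ0, sub_zero]
  have hbound := two_rpow_mul_rpow_mul_norm_sq_le h0 h1 ht0 hcont
  rw [← hφt] at hbound
  calc ‖φ t‖ ^ 2 = t ^ α / α ^ 2 * (α ^ 2 * t ^ (-α) * ‖φ t‖ ^ 2) := by
        rw [rpow_neg ht0.le]
        field_simp
    _ ≤ t ^ α / α ^ 2 * (2 ^ (α - 1) * t ^ (-α) * ‖φ t‖ ^ 2) := by
        gcongr
        exact sq_le_two_rpow_sub_one h0.le h1.le
    _ ≤ _ := by gcongr

theorem pointwise_bound_via_fracEnergy {H : Type*} [NormedAddCommGroup H]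
    [InnerProductSpace ℝ H] [CompleteSpace H]
    (T α : ℝ) (hT : 0 < T) (h0 : 0 < α) (h1 : α < 1)
    (φ φ' : ℝ → H) (hderiv : ∀ s, HasDerivAt φ (φ' s) s) (hcont : Continuous φ')
    (hφ0 : φ 0 = 0) (t : ℝ) (ht : t ∈ Set.Ioc (0:ℝ) T) :
    ‖φ t‖ ^ 2 ≤ (t ^ α / α ^ 2) *
      ∫ s in (0:ℝ)..t, ⟪∫ r in (0:ℝ)..s, w (1 - α) (s - r) • φ' r, φ' s⟫ :=
  pointwise_bound_via_fracEnergy_general T α h0 h1 φ φ' hderiv hcont hφ0 t ht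
end
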